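/- Let ζ = (1+√3·i)/2 ∈ ℂ and let z ∈ ℤ[ζ] have combinatorial length ‖z‖ ≥ 6. Then every nonzero multiple t = wz (with w ∈ ℤ[ζ], w ≠ 0) satisfies ‖t‖ ≥ 6. -/

import Mathlib

/-!
A sum of `n` sixth roots of unity has absolute value at most `n`, so `combLen (w * z) ≤ 5` gives
`|wz| ≤ 5`, hence `|z| ≤ 5` because a nonzero Eisenstein integer has `|w|² = a² + ab + b² ≥ 1`.
Conversely `z = a + bζ` is a sum of `h = max(|a|, |b|, |a + b|)` units (its hexagonal norm), and
`3h² ≤ 4|z|² ≤ 100` forces `h ≤ 5`, contradicting `combLen z ≥ 6`.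
-/

/-- ζ = (1+√3·i)/2, a primitive sixth root of unity. -/
noncomputable def zeta6 : ℂ := (1 + Real.sqrt 3 * Complex.I) / 2

/-- The Eisenstein integers ℤ[ζ], the subring of ℂ generated by ζ. -/
noncomputable def Eisenstein : Subring ℂ := Subring.closure {zeta6}

/-- The combinatorial length: the minimal number n of units of ℤ[ζ]
(= sixth roots of unity) summing to z. -/
noncomputable def combLen (z : ℂ) : ℕ :=
  sInf {n : ℕ | ∃ f : Fin n → ℂ, (∀ k, (f k) ^ 6 = 1) ∧ z = ∑ k, f k}

lemma zeta6_sq : zeta6 ^ 2 = zeta6 - 1 := by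
  have h3 : ((Real.sqrt 3 : ℝ) : ℂ) ^ 2 = 3 := by
    rw [← Complex.ofReal_pow, Real.sq_sqrt] <;> norm_num
  unfold zeta6
  linear_combination (Complex.I_sq * ((Real.sqrt 3 : ℝ) : ℂ) ^ 2 - h3) / 4

lemma zeta6_pow_six : zeta6 ^ 6 = 1 := by
  linear_combination (zeta6 ^ 4 + zeta6 ^ 3 - zeta6 - 1) * zeta6_sq

lemma zeta6_sq_pow_six : (zeta6 ^ 2) ^ 6 = 1 := by
  rw [← pow_mul, mul_comm, pow_mul, zeta6_pow_six, one_pow]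

lemma normSq_intCast_add_intCast_mul_zeta6 (a b : ℤ) :
    Complex.normSq (a + b * zeta6) = a ^ 2 + a * b + b ^ 2 := by
  have h3 : Real.sqrt 3 ^ 2 = 3 := Real.sq_sqrt (by norm_num)
  simp only [zeta6, Complex.normSq_apply, Complex.add_re, Complex.intCast_re, Complex.mul_re,
    Complex.div_ofNat_re, Complex.one_re, Complex.ofReal_re, Complex.I_re, mul_zero,
    Complex.ofReal_im, Complex.I_im, mul_one, sub_self, add_zero, one_div, Complex.intCast_im,
    Complex.div_ofNat_im, Complex.add_im, Complex.one_im, Complex.mul_im, zero_add, zero_mul,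
    sub_zero]
  linear_combination (b : ℝ) ^ 2 / 4 * h3

lemma exists_eq_intCast_add_intCast_mul_zeta6 {x : ℂ} (hx : x ∈ Eisenstein) :
    ∃ a b : ℤ, x = a + b * zeta6 := by
  induction hx using Subring.closure_induction with
  | mem x hx => exact ⟨0, 1, by simp [Set.mem_singleton_iff.mp hx]⟩
  | zero => exact ⟨0, 0, by simp⟩
  | one => exact ⟨1, 0, by simp⟩
  | add x y _ _ hx hy =>
    obtain ⟨a, b, rfl⟩ := hx
    obtain ⟨c, d, rfl⟩ := hy
    exact ⟨a + c, b + d, by push_cast; ring⟩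
  | neg x _ hx =>
    obtain ⟨a, b, rfl⟩ := hx
    exact ⟨-a, -b, by push_cast; ring⟩
  | mul x y _ _ hx hy =>
    obtain ⟨a, b, rfl⟩ := hx
    obtain ⟨c, d, rfl⟩ := hy
    exact ⟨a * c - b * d, a * d + b * c + b * d, by
      push_cast; linear_combination b * d * zeta6_sq⟩

lemma one_le_normSq_of_mem_Eisenstein {x : ℂ} (hx : x ∈ Eisenstein) (hx0 : x ≠ 0) :
    1 ≤ Complex.normSq x := by
  obtain ⟨a, b, rfl⟩ := exists_eq_intCast_add_intCast_mul_zeta6 hx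
  have hab : a ≠ 0 ∨ b ≠ 0 := by
    by_contra! h
    exact hx0 (by simp [h.1, h.2])
  have : (1 : ℤ) ≤ a ^ 2 + a * b + b ^ 2 := by
    rcases hab with ha | hb
    · nlinarith [Int.one_le_abs ha, sq_abs a, sq_nonneg (a + 2 * b)]
    · nlinarith [Int.one_le_abs hb, sq_abs b, sq_nonneg (2 * a + b)]
  rw [normSq_intCast_add_intCast_mul_zeta6]
  exact_mod_cast this

def IsRootSum (n : ℕ) (z : ℂ) : Prop :=
  ∃ f : Fin n → ℂ, (∀ k, f k ^ 6 = 1) ∧ z = ∑ k, f k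

section IsRootSum

variable {n m : ℕ} {x y z : ℂ}

lemma combLen_le (h : IsRootSum n z) : combLen z ≤ n :=
  Nat.sInf_le h

lemma IsRootSum.norm_le (h : IsRootSum n z) : ‖z‖ ≤ n := by
  obtain ⟨f, hf, rfl⟩ := h
  calc ‖∑ k, f k‖ ≤ ∑ k, ‖f k‖ := norm_sum_le _ _
    _ = n := by simp [Complex.norm_eq_one_of_pow_eq_one (hf _) (by norm_num : 6 ≠ 0)]

lemma IsRootSum.add (hx : IsRootSum n x) (hy : IsRootSum m y) : IsRootSum (n + m) (x + y) := by
  obtain ⟨f, hf, rfl⟩ := hx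
  obtain ⟨g, hg, rfl⟩ := hy
  refine ⟨Fin.append f g, fun k => ?_, by rw [Fin.sum_univ_add]; simp⟩
  induction k using Fin.addCases <;> simp [hf, hg]

lemma isRootSum_intCast_mul {u : ℂ} (hu : u ^ 6 = 1) (a : ℤ) : IsRootSum a.natAbs (a * u) := by
  have hu' : (-u) ^ 6 = 1 := by rw [Even.neg_pow (by decide), hu]
  rcases Int.natAbs_eq a with ha | ha
  · exact ⟨fun _ => u, fun _ => hu, by rw [ha]; simp⟩
  · exact ⟨fun _ => -u, fun _ => hu', by rw [ha]; simp⟩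

lemma isRootSum_intCast_mul_add_intCast_mul {u v : ℂ} (hu : u ^ 6 = 1) (hv : v ^ 6 = 1)
    (a b : ℤ) : IsRootSum (a.natAbs + b.natAbs) (a * u + b * v) :=
  (isRootSum_intCast_mul hu a).add (isRootSum_intCast_mul hv b)

lemma norm_le_combLen (hz : z ∈ Eisenstein) : ‖z‖ ≤ combLen z := by
  obtain ⟨a, b, rfl⟩ := exists_eq_intCast_add_intCast_mul_zeta6 hz
  have h := isRootSum_intCast_mul_add_intCast_mul (one_pow 6) zeta6_pow_six a b
  rw [mul_one] at h
  exact IsRootSum.norm_le (Nat.sInf_mem (s := {n | IsRootSum n _}) ⟨_, h⟩)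

end IsRootSum

def hexNorm (a b : ℤ) : ℕ :=
  max a.natAbs (max b.natAbs (a + b).natAbs)

lemma combLen_intCast_add_intCast_mul_zeta6_le (a b : ℤ) :
    combLen (a + b * zeta6) ≤ hexNorm a b := by
  have h1 := combLen_le (isRootSum_intCast_mul_add_intCast_mul (one_pow 6) zeta6_pow_six a b)
  have h2 := combLen_le
    (isRootSum_intCast_mul_add_intCast_mul (one_pow 6) zeta6_sq_pow_six (a + b) b)
  have h3 := combLen_le
    (isRootSum_intCast_mul_add_intCast_mul zeta6_pow_six zeta6_sq_pow_six (a + b) (-a))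
  rw [mul_one] at h1 h2
  -- `ζ² = ζ - 1` rewrites `a + bζ` in the units `1, ζ²` and `ζ, ζ²`
  rw [show ((a + b : ℤ) : ℂ) + b * zeta6 ^ 2 = a + b * zeta6 by
    push_cast; linear_combination b * zeta6_sq] at h2
  rw [show ((a + b : ℤ) : ℂ) * zeta6 + (-a : ℤ) * zeta6 ^ 2 = a + b * zeta6 by
    push_cast; linear_combination -a * zeta6_sq, Int.natAbs_neg] at h3
  unfold hexNorm
  omega

lemma three_mul_hexNorm_sq_le (a b : ℤ) :
    3 * (hexNorm a b : ℤ) ^ 2 ≤ 4 * (a ^ 2 + a * b + b ^ 2) := by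
  unfold hexNorm
  push_cast
  rcases max_choice |a| (max |b| |a + b|) with h | h <;> rw [h]
  · nlinarith [sq_abs a, sq_nonneg (a + 2 * b)]
  rcases max_choice |b| |a + b| with h | h <;> rw [h]
  · nlinarith [sq_abs b, sq_nonneg (2 * a + b)]
  · nlinarith [sq_abs (a + b), sq_nonneg (a - b)]

lemma three_mul_combLen_sq_le {z : ℂ} (hz : z ∈ Eisenstein) :
    3 * (combLen z : ℝ) ^ 2 ≤ 4 * Complex.normSq z := by
  obtain ⟨a, b, rfl⟩ := exists_eq_intCast_add_intCast_mul_zeta6 hz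
  have hle : (combLen (a + b * zeta6) : ℤ) ≤ hexNorm a b :=
    Int.ofNat_le.mpr (combLen_intCast_add_intCast_mul_zeta6_le a b)
  have : 3 * (combLen (a + b * zeta6) : ℤ) ^ 2 ≤ 4 * (a ^ 2 + a * b + b ^ 2) :=
    le_trans (by gcongr) (three_mul_hexNorm_sq_le a b)
  rw [normSq_intCast_add_intCast_mul_zeta6]
  exact_mod_cast this

/-- if z ∈ ℤ[ζ] has combinatorial length ≥ 6, then every nonzero
multiple t = wz (w ∈ ℤ[ζ], w ≠ 0) has combinatorial length ≥ 6. -/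
theorem combLen_multiple_ge_six (z w : ℂ) (hz : z ∈ Eisenstein) (hw : w ∈ Eisenstein)
    (hlen : 6 ≤ combLen z) (hw0 : w ≠ 0) : 6 ≤ combLen (w * z) := by
  by_contra! hwz
  have hnorm : ‖w * z‖ ≤ 5 :=
    (norm_le_combLen (mul_mem hw hz)).trans (by exact_mod_cast Nat.le_of_lt_succ hwz)
  have hz25 : Complex.normSq z ≤ 25 := calc
    Complex.normSq z ≤ Complex.normSq w * Complex.normSq z :=
      le_mul_of_one_le_left (Complex.normSq_nonneg z) (one_le_normSq_of_mem_Eisenstein hw hw0)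
    _ = ‖w * z‖ ^ 2 := by rw [Complex.sq_norm, Complex.normSq_mul]
    _ ≤ 25 := by nlinarith [norm_nonneg (w * z)]
  have hz6 : (6 : ℝ) ≤ combLen z := by exact_mod_cast hlen
  nlinarith [three_mul_combLen_sq_le hz]
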